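/- Let c be a point of ℝ³ (the camera position) and X ⊆ ℝ³ an object model, with occlusion region O(X) = {x : ∃ α ∈ (0,1), α·(x − c) + c ∈ X}. If X is compact and c ∉ X, then the union X ∪ O(X) (the object together with its shadow) is a closed subset of ℝ³. -/

import Mathlib

/-!
Since `c ∉ X`, the parameter `α = 0` never occurs, and `α = 1` recovers `X` itself; so the object
together with its shadow is `{x | ∃ α ∈ [0, 1], α • (x - c) + c ∈ X}`, the projection of a closed
subset of `E × [0, 1]`. Projection along a compact factor is a closed map.
-/

open Set

theorem IsClosed.setOf_exists_mem_of_isCompact {X Y : Type*} [TopologicalSpace X]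
    [TopologicalSpace Y] {P : Set (X × Y)} (hP : IsClosed P) {K : Set Y} (hK : IsCompact K) :
    IsClosed {x | ∃ y ∈ K, (x, y) ∈ P} := by
  have : CompactSpace K := isCompact_iff_compactSpace.mp hK
  have hclosed : IsClosed (Prod.map id (↑) ⁻¹' P : Set (X × K)) :=
    hP.preimage (continuous_id.prodMap continuous_subtype_val)
  convert isClosedMap_fst_of_compactSpace _ hclosed using 1
  ext x
  simp

section Occlusion

variable {E : Type*} [AddCommGroup E] [Module ℝ E]

def occlusion (c : E) (X : Set E) : Set E :=
  {x | ∃ α ∈ Ioo (0 : ℝ) 1, α • (x - c) + c ∈ X}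

theorem union_occlusion_eq {c : E} {X : Set E} (hc : c ∉ X) :
    X ∪ occlusion c X = {x | ∃ α ∈ Icc (0 : ℝ) 1, α • (x - c) + c ∈ X} := by
  ext x
  constructor
  · rintro (hx | ⟨α, hα, hαx⟩)
    · exact ⟨1, right_mem_Icc.mpr zero_le_one, by simpa using hx⟩
    · exact ⟨α, Ioo_subset_Icc_self hα, hαx⟩
  · rintro ⟨α, hα, hαx⟩
    rcases eq_endpoints_or_mem_Ioo_of_mem_Icc hα with rfl | rfl | hα
    · simp [hc] at hαx
    · exact Or.inl (by simpa using hαx)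
    · exact Or.inr ⟨α, hα, hαx⟩

variable [TopologicalSpace E] [IsTopologicalAddGroup E] [ContinuousSMul ℝ E]

theorem IsClosed.union_occlusion {c : E} {X : Set E} (hX : IsClosed X) (hc : c ∉ X) :
    IsClosed (X ∪ occlusion c X) := by
  rw [union_occlusion_eq hc]
  exact (hX.preimage (by fun_prop : Continuous fun p : E × ℝ => p.2 • (p.1 - c) + c))
    |>.setOf_exists_mem_of_isCompact isCompact_Icc

end Occlusion

/-- For a compact object not containing the camera, the object together with its shadow
is a closed set. -/
theorem object_union_occlusion_isClosed
    (c : EuclideanSpace ℝ (Fin 3)) (X : Set (EuclideanSpace ℝ (Fin 3)))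
    (hX : IsCompact X) (hc : c ∉ X) :
    IsClosed
      (X ∪ {x : EuclideanSpace ℝ (Fin 3) | ∃ α ∈ Set.Ioo (0 : ℝ) 1, α • (x - c) + c ∈ X}) :=
  hX.isClosed.union_occlusion hc
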